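/- Let L be a number field and let β₁, …, β₈ ∈ L satisfy: 2β_k ∈ O_L for all k, β_k − β_ℓ ∈ O_L for all k, ℓ, and β₁ + ⋯ + β₈ = 0. Then Σ_σ [ (|σ(β₁)|² − (7/4) Re σ(β₁)) + Σ_{k=2}^8 (|σ(β_k)|² + (1/4) Re σ(β_k)) ] ≥ 0 and Σ_σ [ Σ_{k=1}^2 (|σ(β_k)|² − (3/2) Re σ(β_k)) + Σ_{k=3}^8 (|σ(β_k)|² + (1/2) Re σ(β_k)) ] ≥ 0, where σ ranges over all field embeddings of L into ℂ. -/

import Mathlib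

/-!
At a vertex `v` of the Voronoi cell the summand is `∑ₖ ‖σ βₖ - vₖ‖² - ‖v‖²`. Write `v = c / r` with
`c` an odd integer vector and `r = 8`, resp. `4`. The coordinates of `t = r β - c` lie in `𝓞_L`, are
nonzero (they are odd), pairwise congruent modulo `r`, and sum to zero, and the claim becomes
`∑_σ ∑ₖ ‖σ tₖ‖² ≥ n ‖c‖²` with `n = [L : ℚ]` and `‖c‖² = 56`, resp. `24`.

As `∑ₖ tₖ = 0`, we have `16 ∑ₖ ‖σ tₖ‖² = ∑ₖ ∑ₗ ‖σ (tₖ - tₗ)‖²`, and by AM-GM and `|N(x)| ≥ 1` every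
nonzero difference `tₖ - tₗ ∈ r 𝓞_L` contributes at least `r² n` once summed over `σ`. What remains
is to count the ordered pairs with `tₖ ≠ tₗ`: there are at least 14 when `t` is not constant, and
at least 24 unless all coordinates but one agree; in that case the remaining one is `-7` times a
nonzero algebraic integer and alone contributes `49 n`.
-/

open NumberField Finset

section DistinctPairs

variable {ι X : Type*} [Fintype ι] [DecidableEq X]

def distinctPairs (t : ι → X) : Finset (ι × ι) := {p : ι × ι | t p.1 ≠ t p.2}

lemma mul_card_distinctPairs_le_sum_sum (t : ι → X) {D : ι → ι → ℝ} {c : ℝ}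
    (hD₀ : ∀ k l, 0 ≤ D k l) (hD : ∀ k l, t k ≠ t l → c ≤ D k l) :
    c * #(distinctPairs t) ≤ ∑ k, ∑ l, D k l := by
  rw [← sum_product', univ_product_univ, mul_comm, ← nsmul_eq_mul, ← sum_const]
  calc ∑ _p ∈ distinctPairs t, c ≤ ∑ p ∈ distinctPairs t, D p.1 p.2 :=
        sum_le_sum fun p hp => hD p.1 p.2 (mem_filter.mp hp).2
    _ ≤ ∑ p : ι × ι, D p.1 p.2 := sum_le_univ_sum_of_nonneg fun p => hD₀ p.1 p.2

lemma two_mul_card_fiber_mul_card_compl_le (t : ι → X) (a : ι) :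
    2 * (#{k | t k = t a} * #{k | t k ≠ t a}) ≤ #(distinctPairs t) := by
  set F : Finset ι := {k | t k = t a}
  set G : Finset ι := {k | t k ≠ t a}
  have hdisj : Disjoint (F ×ˢ G) (G ×ˢ F) := by
    simp only [disjoint_left, mem_product, F, G, mem_filter]
    tauto
  have hsub : (F ×ˢ G).disjUnion (G ×ˢ F) hdisj ⊆ distinctPairs t := by
    intro p
    simp only [mem_disjUnion, mem_product, F, G, mem_filter, distinctPairs, mem_univ, true_and]
    rintro (⟨h₁, h₂⟩ | ⟨h₁, h₂⟩)
    · rwa [h₁, ne_comm]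
    · rwa [h₂]
  have := card_le_card hsub
  rw [card_disjUnion, card_product, card_product] at this
  linarith [mul_comm #F #G]

lemma card_distinctPairs_of_injective {t : ι → X} (ht : Function.Injective t) :
    #(distinctPairs t) = Fintype.card ι * (Fintype.card ι - 1) := by
  have : distinctPairs t = univ.offDiag := by
    ext p
    simp [distinctPairs, ht.ne_iff]
  rw [this, offDiag_card, card_univ, Nat.mul_sub_one]

lemma card_fiber_add_card_compl (t : ι → X) (a : ι) :
    #{k | t k = t a} + #{k | t k ≠ t a} = Fintype.card ι :=
  card_filter_add_card_filter_not _

lemma two_mul_card_sub_one_le_card_distinctPairs {t : ι → X} {a b : ι} (hab : t a ≠ t b) :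
    2 * (Fintype.card ι - 1) ≤ #(distinctPairs t) := by
  have hF : 0 < #{k | t k = t a} := card_pos.mpr ⟨a, by simp⟩
  have hG : 0 < #{k | t k ≠ t a} := card_pos.mpr ⟨b, by simp [hab.symm]⟩
  have h := two_mul_card_fiber_mul_card_compl_le t a
  rw [← card_fiber_add_card_compl t a]
  generalize #{k | t k = t a} = f at *
  generalize #{k | t k ≠ t a} = g at *
  have : f + g ≤ f * g + 1 := by nlinarith
  omega

lemma four_mul_card_sub_two_le_card_distinctPairs_or (t : ι → X) :
    4 * (Fintype.card ι - 2) ≤ #(distinctPairs t) ∨ ∃ j c, ∀ k, k ≠ j → t k = c := by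
  classical
  by_cases hinj : Function.Injective t
  · left
    rw [card_distinctPairs_of_injective hinj]
    rcases Nat.lt_or_ge (Fintype.card ι) 2 with hm | hm
    · omega
    · obtain ⟨m, hm⟩ := Nat.exists_eq_add_of_le' hm
      rw [hm, Nat.add_sub_cancel, show m + 2 - 1 = m + 1 by omega]
      nlinarith [Nat.le_mul_self m]
  obtain ⟨a, b, hab, hne⟩ : ∃ a b, t a = t b ∧ a ≠ b := by
    simpa [Function.Injective] using hinj
  rcases Nat.lt_or_ge #{k | t k ≠ t a} 2 with hG | hG
  · right
    have : Nonempty ι := ⟨a⟩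
    obtain ⟨j, hj⟩ := card_le_one_iff_subset_singleton.mp (Nat.le_of_lt_succ hG)
    refine ⟨j, t a, fun k hk => ?_⟩
    by_contra h
    exact hk (mem_singleton.mp (hj (by simpa using h)))
  · left
    have hF : 2 ≤ #{k | t k = t a} := by
      rw [← card_pair hne]
      refine card_le_card fun k hk => ?_
      rcases mem_insert.mp hk with rfl | hk <;> simp_all
    have h := two_mul_card_fiber_mul_card_compl_le t a
    rw [← card_fiber_add_card_compl t a]
    generalize #{k | t k = t a} = f at *
    generalize #{k | t k ≠ t a} = g at *
    have : 2 * (f + g) ≤ f * g + 4 := by nlinarith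
    omega

end DistinctPairs

theorem sum_sum_norm_sub_sq {E ι : Type*} [NormedAddCommGroup E] [InnerProductSpace ℝ E]
    [Fintype ι] (w : ι → E) :
    ∑ k, ∑ l, ‖w k - w l‖ ^ 2 = 2 * Fintype.card ι * ∑ k, ‖w k‖ ^ 2 - 2 * ‖∑ k, w k‖ ^ 2 := by
  simp_rw [norm_sub_sq_real, sum_add_distrib, sum_sub_distrib, ← mul_sum, ← inner_sum,
    ← sum_inner, real_inner_self_eq_norm_sq, sum_const, card_univ, nsmul_eq_mul]
  rw [← mul_sum]
  ring

section NumberField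

variable {L : Type*} [Field L]

lemma two_mul_ne_intCast_of_odd [CharZero L] {y : L} (hy : IsIntegral ℤ y) {c : ℤ} (hc : Odd c) :
    2 * y ≠ c := by
  intro h
  have hy' : y = algebraMap ℚ L (c / 2) := by
    rw [map_div₀, map_intCast, map_ofNat, ← h]
    ring
  rw [hy', isIntegral_algebraMap_iff (algebraMap ℚ L).injective] at hy
  obtain ⟨m, hm⟩ := IsIntegrallyClosed.isIntegral_iff.mp hy
  have : c = m * 2 := by
    rw [eq_intCast] at hm
    field_simp at hm
    exact_mod_cast hm.symm
  exact Int.not_even_iff_odd.mpr hc ⟨m, by omega⟩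

variable [NumberField L]

lemma prod_norm_embeddings_eq_abs_norm (x : L) :
    ∏ σ : L →+* ℂ, ‖σ x‖ = |(Algebra.norm ℚ x : ℝ)| := by
  rw [← Fintype.prod_equiv (RingHom.equivRatAlgHom L ℂ).symm (fun ψ => ‖ψ x‖) _ (fun _ => rfl),
    ← norm_prod, ← Algebra.norm_eq_prod_embeddings, eq_ratCast, Complex.norm_ratCast]

lemma one_le_prod_norm_embeddings {x : L} (hx : IsIntegral ℤ x) (h0 : x ≠ 0) :
    1 ≤ ∏ σ : L →+* ℂ, ‖σ x‖ := by
  obtain ⟨x, rfl⟩ : ∃ x' : 𝓞 L, (x' : L) = x := ⟨⟨x, hx⟩, rfl⟩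
  rw [prod_norm_embeddings_eq_abs_norm, ← Algebra.coe_norm_int, Rat.cast_intCast, ← Int.cast_abs]
  exact_mod_cast Int.one_le_abs (Algebra.norm_ne_zero_iff.mpr (by simpa using h0))

lemma card_le_sum_norm_sq_embeddings {x : L} (hx : IsIntegral ℤ x) (h0 : x ≠ 0) :
    (Fintype.card (L →+* ℂ) : ℝ) ≤ ∑ σ : L →+* ℂ, ‖σ x‖ ^ 2 := by
  have hn : (0 : ℝ) < Fintype.card (L →+* ℂ) := by exact_mod_cast Fintype.card_pos
  have amgm := Real.geom_mean_le_arith_mean univ (fun _ => 1) (fun σ : L →+* ℂ => ‖σ x‖ ^ 2)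
    (fun _ _ => zero_le_one) (by simpa using hn) (fun _ _ => by positivity)
  simp only [Real.rpow_one, one_mul, sum_const, card_univ, nsmul_eq_mul, mul_one, prod_pow] at amgm
  rw [le_div_iff₀ hn] at amgm
  have : 1 ≤ (∏ σ : L →+* ℂ, ‖σ x‖) ^ 2 := one_le_pow₀ (one_le_prod_norm_embeddings hx h0)
  nlinarith [Real.one_le_rpow this (inv_nonneg.mpr hn.le)]

lemma sq_mul_card_le_sum_norm_sq_embeddings (r : ℤ) {y : L} (hy : IsIntegral ℤ y) (h0 : y ≠ 0) :
    r ^ 2 * (Fintype.card (L →+* ℂ) : ℝ) ≤ ∑ σ : L →+* ℂ, ‖σ (r * y)‖ ^ 2 := by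
  simp_rw [map_mul, map_intCast, norm_mul, mul_pow, Complex.norm_intCast, sq_abs, ← mul_sum]
  exact mul_le_mul_of_nonneg_left (card_le_sum_norm_sq_embeddings hy h0) (sq_nonneg _)

section Embeddings

variable {ι : Type*} [Fintype ι]

lemma sum_sum_sum_norm_sq_sub_embeddings (t : ι → L) (ht : ∑ k, t k = 0) :
    ∑ k, ∑ l, ∑ σ : L →+* ℂ, ‖σ (t k - t l)‖ ^ 2 =
      2 * Fintype.card ι * ∑ σ : L →+* ℂ, ∑ k, ‖σ (t k)‖ ^ 2 := by
  rw [(sum_congr rfl fun k _ => sum_comm).trans sum_comm, mul_sum]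
  refine sum_congr rfl fun σ _ => ?_
  simp_rw [map_sub, sum_sum_norm_sub_sq, ← map_sum, ht, map_zero, norm_zero]
  ring

lemma sq_mul_card_mul_card_distinctPairs_le [DecidableEq L] (t : ι → L) (ht : ∑ k, t k = 0)
    (r : ℤ) (hdiff : ∀ k l, ∃ y, IsIntegral ℤ y ∧ t k - t l = r * y) :
    (r : ℝ) ^ 2 * Fintype.card (L →+* ℂ) * #(distinctPairs t) ≤
      2 * Fintype.card ι * ∑ σ : L →+* ℂ, ∑ k, ‖σ (t k)‖ ^ 2 := by
  rw [← sum_sum_sum_norm_sq_sub_embeddings t ht]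
  refine mul_card_distinctPairs_le_sum_sum t (fun k l => sum_nonneg fun σ _ => by positivity)
    fun k l hkl => ?_
  obtain ⟨y, hy, hkly⟩ := hdiff k l
  rw [hkly]
  refine sq_mul_card_le_sum_norm_sq_embeddings r hy ?_
  rintro rfl
  exact hkl (sub_eq_zero.mp (by simpa using hkly))

lemma sq_card_sub_one_mul_card_le_of_forall_ne_eq (t : ι → L) (ht : ∑ k, t k = 0) {j : ι}
    {c : L} (hc : IsIntegral ℤ c) (hc0 : c ≠ 0) (hjc : ∀ k, k ≠ j → t k = c) :
    ((Fintype.card ι - 1 : ℕ) : ℝ) ^ 2 * Fintype.card (L →+* ℂ) ≤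
      ∑ σ : L →+* ℂ, ∑ k, ‖σ (t k)‖ ^ 2 := by
  classical
  have htj : t j = ((-(Fintype.card ι - 1 : ℕ) : ℤ) : L) * c := by
    have := add_sum_erase univ t (mem_univ j)
    rw [sum_congr rfl fun k hk => hjc k (ne_of_mem_erase hk), sum_const,
      card_erase_of_mem (mem_univ j), card_univ, ht, nsmul_eq_mul] at this
    push_cast
    linear_combination this
  calc ((Fintype.card ι - 1 : ℕ) : ℝ) ^ 2 * Fintype.card (L →+* ℂ)
      = (((-(Fintype.card ι - 1 : ℕ) : ℤ)) : ℝ) ^ 2 * Fintype.card (L →+* ℂ) := by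
        push_cast; ring
    _ ≤ ∑ σ : L →+* ℂ, ‖σ (t j)‖ ^ 2 := htj ▸ sq_mul_card_le_sum_norm_sq_embeddings _ hc hc0
    _ ≤ _ := sum_le_sum fun σ _ =>
        single_le_sum (f := fun k => ‖σ (t k)‖ ^ 2) (fun _ _ => by positivity) (mem_univ j)

end Embeddings

end NumberField

section ScaledOffset

variable {L ι : Type*} [Field L]

def scaledOffset (r : ℤ) (c : ι → ℤ) (β : ι → L) (k : ι) : L := r * β k - c k

variable {β : ι → L} {r : ℤ} {c : ι → ℤ}

lemma sum_scaledOffset_eq_zero [Fintype ι] (hβ : ∑ k, β k = 0) (hc : ∑ k, c k = 0) :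
    ∑ k, scaledOffset r c β k = 0 := by
  simp only [scaledOffset]
  rw [sum_sub_distrib, ← mul_sum, hβ, ← Int.cast_sum, hc]
  simp

lemma isIntegral_scaledOffset {k : ι} (h2 : IsIntegral ℤ (2 * β k)) (hr : 2 ∣ r) :
    IsIntegral ℤ (scaledOffset r c β k) := by
  obtain ⟨q, rfl⟩ := hr
  rw [scaledOffset, show ((2 * q : ℤ) : L) * β k = q * (2 * β k) by push_cast; ring]
  exact ((isIntegral_intCast q).mul h2).sub (isIntegral_intCast _)

lemma scaledOffset_ne_zero [CharZero L] {k : ι} (h2 : IsIntegral ℤ (2 * β k)) (hr : 4 ∣ r)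
    (hc : Odd (c k)) : scaledOffset r c β k ≠ 0 := by
  obtain ⟨q, rfl⟩ := hr
  rw [scaledOffset, sub_ne_zero,
    show ((4 * q : ℤ) : L) * β k = 2 * (q * (2 * β k)) by push_cast; ring]
  exact two_mul_ne_intCast_of_odd ((isIntegral_intCast q).mul h2) hc

lemma exists_scaledOffset_sub_eq_mul {k l : ι} (hβ : IsIntegral ℤ (β k - β l))
    (hc : r ∣ c k - c l) :
    ∃ y, IsIntegral ℤ y ∧ scaledOffset r c β k - scaledOffset r c β l = r * y := by
  obtain ⟨d, hd⟩ := hc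
  refine ⟨β k - β l - d, hβ.sub (isIntegral_intCast d), ?_⟩
  have := congrArg (Int.cast : ℤ → L) hd
  push_cast at this
  rw [scaledOffset, scaledOffset]
  linear_combination -this

variable [NumberField L] [Fintype ι]

lemma card_sub_one_le_sum_norm_sq_scaledOffset [Nonempty ι] (h2 : ∀ k, IsIntegral ℤ (2 * β k))
    (hdiff : ∀ k l, IsIntegral ℤ (β k - β l)) (hsum : ∑ k, β k = 0) (hr : 4 ∣ r)
    (hodd : ∀ k, Odd (c k)) (hcr : ∀ k l, r ∣ c k - c l) (hc : ∑ k, c k = 0) :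
    (r : ℝ) ^ 2 * Fintype.card (L →+* ℂ) * (Fintype.card ι - 1 : ℕ) ≤
      Fintype.card ι * ∑ σ : L →+* ℂ, ∑ k, ‖σ (scaledOffset r c β k)‖ ^ 2 := by
  classical
  set t := scaledOffset r c β
  have ht : ∑ k, t k = 0 := sum_scaledOffset_eq_zero hsum hc
  obtain ⟨a⟩ := ‹Nonempty ι›
  obtain ⟨b, hb⟩ : ∃ b, t a ≠ t b := by
    by_contra! h
    have : (Fintype.card ι : L) * t a = 0 := by
      rw [← ht, sum_congr rfl fun k _ => (h k).symm, sum_const, card_univ, nsmul_eq_mul]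
    exact scaledOffset_ne_zero (h2 a) hr (hodd a)
      ((mul_eq_zero.mp this).resolve_left (by simp))
  have hpairs : ((2 * (Fintype.card ι - 1) : ℕ) : ℝ) ≤ #(distinctPairs t) :=
    Nat.cast_le.mpr (two_mul_card_sub_one_le_card_distinctPairs hb)
  have hbound := sq_mul_card_mul_card_distinctPairs_le t ht r fun k l =>
    exists_scaledOffset_sub_eq_mul (hdiff k l) (hcr k l)
  push_cast at hpairs
  linarith [mul_le_mul_of_nonneg_left hpairs
    (by positivity : (0 : ℝ) ≤ (r : ℝ) ^ 2 * Fintype.card (L →+* ℂ))]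

lemma card_sub_two_le_sum_norm_sq_scaledOffset_or [Nontrivial ι]
    (h2 : ∀ k, IsIntegral ℤ (2 * β k)) (hdiff : ∀ k l, IsIntegral ℤ (β k - β l))
    (hsum : ∑ k, β k = 0) (hr : 4 ∣ r) (hodd : ∀ k, Odd (c k)) (hcr : ∀ k l, r ∣ c k - c l)
    (hc : ∑ k, c k = 0) :
    (r : ℝ) ^ 2 * Fintype.card (L →+* ℂ) * (2 * (Fintype.card ι - 2) : ℕ) ≤
        Fintype.card ι * ∑ σ : L →+* ℂ, ∑ k, ‖σ (scaledOffset r c β k)‖ ^ 2 ∨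
      ((Fintype.card ι - 1 : ℕ) : ℝ) ^ 2 * Fintype.card (L →+* ℂ) ≤
        ∑ σ : L →+* ℂ, ∑ k, ‖σ (scaledOffset r c β k)‖ ^ 2 := by
  classical
  set t := scaledOffset r c β
  have ht : ∑ k, t k = 0 := sum_scaledOffset_eq_zero hsum hc
  obtain hpairs | ⟨j, c₀, hj⟩ := four_mul_card_sub_two_le_card_distinctPairs_or t
  · left
    have hbound := sq_mul_card_mul_card_distinctPairs_le t ht r fun k l =>
      exists_scaledOffset_sub_eq_mul (hdiff k l) (hcr k l)
    have hpairs' : ((4 * (Fintype.card ι - 2) : ℕ) : ℝ) ≤ #(distinctPairs t) :=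
      Nat.cast_le.mpr hpairs
    push_cast at hpairs' ⊢
    linarith [mul_le_mul_of_nonneg_left hpairs'
      (by positivity : (0 : ℝ) ≤ (r : ℝ) ^ 2 * Fintype.card (L →+* ℂ))]
  · right
    obtain ⟨k, hk⟩ := exists_ne j
    rw [← hj k hk] at hj
    exact sq_card_sub_one_mul_card_le_of_forall_ne_eq t ht
      (isIntegral_scaledOffset (h2 k) ((by norm_num : (2 : ℤ) ∣ 4).trans hr))
      (scaledOffset_ne_zero (h2 k) hr (hodd k)) hj

end ScaledOffset

-- `8` and `4` times the vertices `(7/8, (-1/8)^7)` and `((3/4)^2, (-1/4)^6)` of the Voronoi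
-- cell of `E₇`.
def e7VertexA : Fin 8 → ℤ := ![7, -1, -1, -1, -1, -1, -1, -1]

def e7VertexB : Fin 8 → ℤ := ![3, 3, -1, -1, -1, -1, -1, -1]

section Vertices

variable {L : Type*} [Field L] [NumberField L]

lemma vertexA_summand_eq (σ : L →+* ℂ) (β : Fin 8 → L) :
    (‖σ (β 0)‖ ^ 2 - (7 / 4 : ℝ) * (σ (β 0)).re) +
        ∑ k ∈ univ.filter (fun k : Fin 8 => k ≠ 0), (‖σ (β k)‖ ^ 2 + (1 / 4 : ℝ) * (σ (β k)).re) =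
      (∑ k, ‖σ (scaledOffset 8 e7VertexA β k)‖ ^ 2) / 64 - 7 / 8 := by
  simp only [scaledOffset, map_sub, map_mul, map_intCast]
  simp [e7VertexA, sum_filter, Fin.sum_univ_eight, Complex.sq_norm, Complex.normSq_apply]
  ring

lemma vertexB_summand_eq (σ : L →+* ℂ) (β : Fin 8 → L) :
    (∑ k ∈ univ.filter (fun k : Fin 8 => (k : ℕ) < 2),
        (‖σ (β k)‖ ^ 2 - (3 / 2 : ℝ) * (σ (β k)).re)) +
      ∑ k ∈ univ.filter (fun k : Fin 8 => 2 ≤ (k : ℕ)),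
        (‖σ (β k)‖ ^ 2 + (1 / 2 : ℝ) * (σ (β k)).re) =
      (∑ k, ‖σ (scaledOffset 4 e7VertexB β k)‖ ^ 2) / 16 - 3 / 2 := by
  simp only [scaledOffset, map_sub, map_mul, map_intCast]
  simp [e7VertexB, sum_filter, Fin.sum_univ_eight, Complex.sq_norm, Complex.normSq_apply]
  ring

end Vertices

/-- Lemma 5.16 (the condition P(L/ℚ, E₇) at the vertices of the Voronoi cell of E₇):
for `β₁, …, β₈ ∈ ½𝓞_L` with the same class in `(½𝓞_L)/𝓞_L` and zero sum:
`Σ_σ [(|σ(β₁)|² − (7/4) Re σ(β₁)) + Σ_{k=2}^8 (|σ(β_k)|² + (1/4) Re σ(β_k))] ≥ 0` and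
`Σ_σ [Σ_{k=1}^2 (|σ(β_k)|² − (3/2) Re σ(β_k)) + Σ_{k=3}^8 (|σ(β_k)|² + (1/2) Re σ(β_k))] ≥ 0`. -/
theorem statement7 (L : Type*) [Field L] [NumberField L] (β : Fin 8 → L)
    (h2 : ∀ k, IsIntegral ℤ (2 * β k))
    (hdiff : ∀ k l, IsIntegral ℤ (β k - β l))
    (hsum : ∑ k, β k = 0) :
    (0 ≤ ∑ σ : L →+* ℂ,
        ((‖σ (β 0)‖ ^ 2 - (7 / 4 : ℝ) * (σ (β 0)).re) +
          ∑ k ∈ Finset.univ.filter (fun k : Fin 8 => k ≠ 0),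
            (‖σ (β k)‖ ^ 2 + (1 / 4 : ℝ) * (σ (β k)).re))) ∧
      (0 ≤ ∑ σ : L →+* ℂ,
        ((∑ k ∈ Finset.univ.filter (fun k : Fin 8 => (k : ℕ) < 2),
            (‖σ (β k)‖ ^ 2 - (3 / 2 : ℝ) * (σ (β k)).re)) +
          ∑ k ∈ Finset.univ.filter (fun k : Fin 8 => 2 ≤ (k : ℕ)),
            (‖σ (β k)‖ ^ 2 + (1 / 2 : ℝ) * (σ (β k)).re))) := by
  constructor
  · have h := card_sub_one_le_sum_norm_sq_scaledOffset (r := 8) (c := e7VertexA) h2 hdiff hsum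
      (by decide) (by decide) (by decide) (by decide)
    rw [sum_congr rfl fun σ _ => vertexA_summand_eq σ β, sum_sub_distrib, ← sum_div, sum_const,
      card_univ, nsmul_eq_mul]
    norm_num at h ⊢
    linarith
  · rw [sum_congr rfl fun σ _ => vertexB_summand_eq σ β, sum_sub_distrib, ← sum_div, sum_const,
      card_univ, nsmul_eq_mul]
    rcases card_sub_two_le_sum_norm_sq_scaledOffset_or (r := 4) (c := e7VertexB) h2 hdiff hsum
      (by decide) (by decide) (by decide) (by decide) with h | h <;>
    · norm_num at h ⊢
      linarith
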